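/- Let M > 0, Q ≠ 0 and s ∈ (0,1] satisfy 8Q² < 9sM² < 9Q², and let Λ = Λ₋ (which is then positive). Then there exists r₀ > 0 such that P(r₀,s) = 0, P'(r₀,s) = 0 and P''(r₀,s) < 0, i.e. r₀ is a double root of P(·,s) at which P has a local maximum. -/
import Mathlib


noncomputable section

/-- The quartic polynomial `P(r,s) = sL/3*r^4 - r^2 + 2sM*r - sQ^2` (case `Q != 0`). -/
def P (M Q Λ s r : ℝ) : ℝ := s * Λ / 3 * r ^ 4 - r ^ 2 + 2 * s * M * r - s * Q ^ 2

/-- First derivative of `P` with respect to `r`. -/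
def P' (M Q Λ s r : ℝ) : ℝ := 4 * s * Λ / 3 * r ^ 3 - 2 * r + 2 * s * M

/-- Second derivative of `P` with respect to `r`. -/
def P'' (M Q Λ s r : ℝ) : ℝ := 4 * s * Λ * r ^ 2 - 2

/-- `Λ₋`, defined for `β := 9sM² − 8Q² ≥ 0`. -/
def Λminus (M Q s : ℝ) : ℝ :=
  1 / (32 * s ^ 2 * Q ^ 6) *
    (8 * Q ^ 4 - (9 * s * M ^ 2 - 8 * Q ^ 2) * (9 * s * M ^ 2 - 8 * Q ^ 2 + 4 * Q ^ 2)
      - 3 * Real.sqrt (s * M ^ 2 * (9 * s * M ^ 2 - 8 * Q ^ 2) ^ 3))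

/-- `Λ₊`, defined for `β := 9sM² − 8Q² ≥ 0`. -/
def Λplus (M Q s : ℝ) : ℝ :=
  1 / (32 * s ^ 2 * Q ^ 6) *
    (8 * Q ^ 4 - (9 * s * M ^ 2 - 8 * Q ^ 2) * (9 * s * M ^ 2 - 8 * Q ^ 2 + 4 * Q ^ 2)
      + 3 * Real.sqrt (s * M ^ 2 * (9 * s * M ^ 2 - 8 * Q ^ 2) ^ 3))

/-- Case D₁: a positive double root with a local maximum, at `Λ = Λ₋ > 0`. -/
theorem exists_double_root_case_D1 (M Q s : ℝ)
    (hM : 0 < M) (hQ : Q ≠ 0) (hs0 : 0 < s) (hs1 : s ≤ 1)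
    (h1 : 8 * Q ^ 2 < 9 * s * M ^ 2) (h2 : 9 * s * M ^ 2 < 9 * Q ^ 2) :
    0 < Λminus M Q s ∧
    ∃ r₀ : ℝ, 0 < r₀ ∧ P M Q (Λminus M Q s) s r₀ = 0 ∧
      P' M Q (Λminus M Q s) s r₀ = 0 ∧ P'' M Q (Λminus M Q s) s r₀ < 0 := by
  have hβ : 0 < 9 * s * M ^ 2 - 8 * Q ^ 2 := by linarith
  have hsβ : 0 < s * (9 * s * M ^ 2 - 8 * Q ^ 2) := mul_pos hs0 hβ
  set t := Real.sqrt (s * (9 * s * M ^ 2 - 8 * Q ^ 2)) with htdef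
  have ht2 : t ^ 2 = s * (9 * s * M ^ 2 - 8 * Q ^ 2) := Real.sq_sqrt hsβ.le
  have htpos : 0 < t := Real.sqrt_pos.mpr hsβ
  have hsqrt : Real.sqrt (s * M ^ 2 * (9 * s * M ^ 2 - 8 * Q ^ 2) ^ 3)
      = M * (9 * s * M ^ 2 - 8 * Q ^ 2) * t := by
    rw [show s * M ^ 2 * (9 * s * M ^ 2 - 8 * Q ^ 2) ^ 3
        = (M * (9 * s * M ^ 2 - 8 * Q ^ 2)) ^ 2 * (s * (9 * s * M ^ 2 - 8 * Q ^ 2)) by ring,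
      Real.sqrt_mul (sq_nonneg _), Real.sqrt_sq (by positivity), htdef]
  have htlt : t < s * M := by
    have h : t ^ 2 < (s * M) ^ 2 := by nlinarith
    exact lt_of_pow_lt_pow_left₀ 2 (by positivity) h
  set r₀ := (3 * s * M - t) / 2 with hr₀
  have hr₀pos : 0 < r₀ := by rw [hr₀]; nlinarith
  have hrgt : s * M < r₀ := by rw [hr₀]; nlinarith
  have hr3 : 2 * s * r₀ ^ 3 ≠ 0 := by positivity
  have hkey : (8 * Q ^ 4 - (9 * s * M ^ 2 - 8 * Q ^ 2) * (9 * s * M ^ 2 - 8 * Q ^ 2 + 4 * Q ^ 2)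
      - 3 * (M * (9 * s * M ^ 2 - 8 * Q ^ 2) * t)) * (2 * s * r₀ ^ 3)
      = 3 * (r₀ - s * M) * (32 * s ^ 2 * Q ^ 6) := by
    rw [hr₀]
    linear_combination (6*s*Q^4*t - 6*s*M*Q^2*t^2 - 6*s^2*M*Q^4 + 27*s^2*M^2*Q^2*t
      + 27/4*s^2*M^3*t^2 - 27*s^3*M^3*Q^2 - 81/2*s^3*M^4*t + 243/4*s^4*M^5) * ht2
  have h32 : (32 * s ^ 2 * Q ^ 6) ≠ 0 := by positivity
  have hΛ : Λminus M Q s = 3 * (r₀ - s * M) / (2 * s * r₀ ^ 3) := by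
    rw [eq_div_iff hr3, Λminus, hsqrt, mul_assoc, hkey]
    field_simp
  have hroot : r₀ ^ 2 - 3 * s * M * r₀ + 2 * s * Q ^ 2 = 0 := by
    rw [hr₀]; linear_combination ht2 / 4
  refine ⟨by rw [hΛ]; exact div_pos (by linarith) (by positivity), r₀, hr₀pos, ?_, ?_, ?_⟩
  · rw [P, hΛ]
    have hP : s * (3 * (r₀ - s * M) / (2 * s * r₀ ^ 3)) / 3 * r₀ ^ 4
        = (r₀ - s * M) * r₀ / 2 := by field_simp
    rw [hP]
    linear_combination (-1/2 : ℝ) * hroot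
  · rw [P', hΛ]
    have hP' : 4 * s * (3 * (r₀ - s * M) / (2 * s * r₀ ^ 3)) / 3 * r₀ ^ 3
        = 2 * (r₀ - s * M) := by field_simp; ring
    rw [hP']
    ring
  · rw [P'', hΛ]
    have key : 4 * s * (3 * (r₀ - s * M) / (2 * s * r₀ ^ 3)) * r₀ ^ 2
        = (6 * r₀ - 6 * s * M) / r₀ := by
      field_simp
      ring
    rw [key]
    have : (6 * r₀ - 6 * s * M) / r₀ < 2 := by
      rw [div_lt_iff₀ hr₀pos]
      rw [hr₀]; nlinarith
    linarith
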